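/- Let M be an m×n complex matrix of rank ρ with compact SVD M = UΣV^*, where U is m×ρ and V is n×ρ, each with orthonormal columns, and Σ is the ρ×ρ diagonal matrix of the (positive) singular values of M. Let I be a set of k ≥ ρ row indices and J a set of l ≥ ρ column indices such that U_{I,:} has rank ρ and (V^*)_{:,J} has rank ρ, and set G = U_{I,:}Σ(V^*)_{:,J} and N = G⁺. Then ‖N‖₂ ≤ ‖((V^*)_{:,J})⁺‖₂ · ‖(U_{I,:})⁺‖₂ / σ_ρ(M), where σ_ρ(M) is the smallest positive singular value of M. -/

import Mathlib

/-!
Since `U_{I,:}` has full column rank and `(Vᴴ)_{:,J}` full row rank, their pseudoinverses are a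
left and a right inverse respectively, and then `((Vᴴ)_{:,J})⁺ Σ⁻¹ (U_{I,:})⁺` satisfies the four
Moore–Penrose conditions for `G`. By uniqueness of the pseudoinverse this is `N`, and
submultiplicativity of the spectral norm together with `‖Σ⁻¹‖₂ = 1 / σ_ρ(M)` gives the bound.
-/

open Matrix

/-- Spectral norm of a complex matrix. -/
noncomputable def spec {m n : ℕ} (A : Matrix (Fin m) (Fin n) ℂ) : ℝ :=
  ‖LinearMap.toContinuousLinearMap (Matrix.toEuclideanLin A)‖

/-- `X` is the Moore–Penrose pseudoinverse of `A` (the four Moore–Penrose conditions). -/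
def IsMPInv {k r : ℕ} (A : Matrix (Fin k) (Fin r) ℂ) (X : Matrix (Fin r) (Fin k) ℂ) : Prop :=
  A * X * A = A ∧ X * A * X = X ∧ (A * X)ᴴ = A * X ∧ (X * A)ᴴ = X * A

theorem Matrix.eq_one_of_isIdempotentElem_of_rank_eq {n K : Type*} [Fintype n] [DecidableEq n]
    [Field K] {P : Matrix n n K} (hP : IsIdempotentElem P) (hrank : P.rank = Fintype.card n) :
    P = 1 := by
  have hsurj : Function.Surjective P.mulVecLin := by
    rw [← LinearMap.range_eq_top]
    apply Submodule.eq_top_of_finrank_eq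
    rw [← Matrix.rank, hrank, Module.finrank_fintype_fun_eq_card]
  refine Matrix.toLin'.injective (LinearMap.ext fun v => ?_)
  obtain ⟨x, rfl⟩ := hsurj v
  simp [Matrix.mulVec_mulVec, hP.eq]

namespace IsMPInv

variable {k r l : ℕ} {A : Matrix (Fin k) (Fin r) ℂ} {X : Matrix (Fin r) (Fin k) ℂ}

theorem unique {Y : Matrix (Fin r) (Fin k) ℂ} (hX : IsMPInv A X) (hY : IsMPInv A Y) : X = Y := by
  obtain ⟨hx1, hx2, hx3, hx4⟩ := hX
  obtain ⟨hy1, hy2, hy3, hy4⟩ := hY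
  have hAX : A * X = A * Y := by
    calc A * X = (A * Y)ᴴ * (A * X)ᴴ := by rw [hy3, hx3, ← Matrix.mul_assoc, hy1]
      _ = (A * X * A * Y)ᴴ := by simp only [conjTranspose_mul, Matrix.mul_assoc]
      _ = A * Y := by rw [hx1, hy3]
  have hXA : X * A = Y * A := by
    calc X * A = (X * A)ᴴ * (Y * A)ᴴ := by
          rw [hy4, hx4, Matrix.mul_assoc, ← Matrix.mul_assoc A, hy1]
      _ = (Y * A * X * A)ᴴ := by simp only [conjTranspose_mul, Matrix.mul_assoc]
      _ = Y * A := by rw [Matrix.mul_assoc Y, Matrix.mul_assoc Y, hx1, hy4]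
  calc X = X * A * X := hx2.symm
    _ = Y * A * Y := by rw [Matrix.mul_assoc, hAX, ← Matrix.mul_assoc, hXA]
    _ = Y := hy2

theorem mul_eq_one_of_rank_eq_width (hX : IsMPInv A X) (hA : A.rank = r) : X * A = 1 := by
  refine Matrix.eq_one_of_isIdempotentElem_of_rank_eq ?_ ?_
  · rw [IsIdempotentElem, ← Matrix.mul_assoc, hX.2.1]
  · refine le_antisymm (by simpa using rank_le_card_width (X * A)) ?_
    calc Fintype.card (Fin r) = (A * (X * A)).rank := by rw [← Matrix.mul_assoc, hX.1, hA]; simp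
      _ ≤ (X * A).rank := rank_mul_le_right _ _

theorem mul_eq_one_of_rank_eq_height (hX : IsMPInv A X) (hA : A.rank = k) : A * X = 1 := by
  refine Matrix.eq_one_of_isIdempotentElem_of_rank_eq ?_ ?_
  · rw [IsIdempotentElem, ← Matrix.mul_assoc, hX.1]
  · refine le_antisymm (by simpa using rank_le_card_width (A * X)) ?_
    calc Fintype.card (Fin k) = (A * X * A).rank := by rw [hX.1, hA]; simp
      _ ≤ (A * X).rank := rank_mul_le_left _ _

theorem mul_mul {B : Matrix (Fin r) (Fin l) ℂ} {Y : Matrix (Fin l) (Fin r) ℂ}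
    {D E : Matrix (Fin r) (Fin r) ℂ} (hX : IsMPInv A X) (hY : IsMPInv B Y)
    (hXA : X * A = 1) (hBY : B * Y = 1) (hED : E * D = 1) :
    IsMPInv (A * D * B) (Y * E * X) := by
  have hDE : D * E = 1 := mul_eq_one_comm.mp hED
  have hGN : A * D * B * (Y * E * X) = A * X := by
    simp only [Matrix.mul_assoc]
    rw [← Matrix.mul_assoc B, hBY, Matrix.one_mul, ← Matrix.mul_assoc D, hDE, Matrix.one_mul]
  have hNG : Y * E * X * (A * D * B) = Y * B := by
    simp only [Matrix.mul_assoc]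
    rw [← Matrix.mul_assoc X, hXA, Matrix.one_mul, ← Matrix.mul_assoc E, hED, Matrix.one_mul]
  refine ⟨?_, ?_, hGN ▸ hX.2.2.1, hNG ▸ hY.2.2.2⟩
  · rw [hGN]
    simp only [← Matrix.mul_assoc, hX.1]
  · rw [hNG]
    simp only [← Matrix.mul_assoc, hY.2.1]

end IsMPInv

section spec

open scoped Matrix.Norms.L2Operator

-- `spec A` is by definition the `L2Operator` norm `‖A‖`.

variable {m n p : ℕ}

theorem spec_mul_le (A : Matrix (Fin m) (Fin n) ℂ) (B : Matrix (Fin n) (Fin p) ℂ) :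
    spec (A * B) ≤ spec A * spec B :=
  Matrix.l2_opNorm_mul A B

theorem spec_nonneg (A : Matrix (Fin m) (Fin n) ℂ) : 0 ≤ spec A :=
  norm_nonneg _

theorem spec_diagonal (v : Fin n → ℂ) : spec (diagonal v) = ‖v‖ :=
  Matrix.l2_opNorm_diagonal v

end spec

theorem spec_diagonal_inv_le {ρ : ℕ} {d : Fin ρ → ℝ} (hd : ∀ i, 0 < d i) (hda : Antitone d)
    (i₀ : Fin ρ) (hi₀ : ∀ i, i ≤ i₀) :
    spec (diagonal fun i => ((d i : ℂ))⁻¹) ≤ (d i₀)⁻¹ := by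
  rw [spec_diagonal]
  refine (pi_norm_le_iff_of_nonneg (inv_nonneg.mpr (hd i₀).le)).mpr fun i => ?_
  rw [norm_inv, Complex.norm_real, Real.norm_of_nonneg (hd i).le]
  exact inv_anti₀ (hd i₀) (hda (hi₀ i))

theorem cur_nucleus_norm_bound {m n ρ k l : ℕ} (hρ : 1 ≤ ρ)
    (U : Matrix (Fin m) (Fin ρ) ℂ) (d : Fin ρ → ℝ) (V : Matrix (Fin n) (Fin ρ) ℂ)
    (hd : ∀ i, 0 < d i) (hda : Antitone d)
    (ι : Fin k → Fin m)
    (κ : Fin l → Fin n)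
    (hUI : (U.submatrix ι id).rank = ρ)
    (hVJ : ((Vᴴ).submatrix id κ).rank = ρ)
    (N : Matrix (Fin l) (Fin k) ℂ)
    (hN : IsMPInv (U.submatrix ι id * Matrix.diagonal (fun i => (d i : ℂ)) *
      (Vᴴ).submatrix id κ) N)
    (Up : Matrix (Fin ρ) (Fin k) ℂ) (hUp : IsMPInv (U.submatrix ι id) Up)
    (Vp : Matrix (Fin l) (Fin ρ) ℂ) (hVp : IsMPInv ((Vᴴ).submatrix id κ) Vp) :
    spec N ≤ spec Vp * spec Up / d ⟨ρ - 1, by omega⟩ := by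
  set E : Matrix (Fin ρ) (Fin ρ) ℂ := diagonal fun i => ((d i : ℂ))⁻¹
  have hED : E * diagonal (fun i => (d i : ℂ)) = 1 := by
    rw [diagonal_mul_diagonal, ← diagonal_one]
    exact congrArg diagonal (funext fun i => inv_mul_cancel₀ (by exact_mod_cast (hd i).ne'))
  have hNeq : N = Vp * E * Up := hN.unique <| IsMPInv.mul_mul hUp hVp
    (hUp.mul_eq_one_of_rank_eq_width hUI) (hVp.mul_eq_one_of_rank_eq_height hVJ) hED
  have hE : spec E ≤ (d ⟨ρ - 1, by omega⟩)⁻¹ :=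
    spec_diagonal_inv_le hd hda _ fun i => Fin.mk_le_of_le_val (Nat.le_sub_one_of_lt i.isLt)
  calc spec N ≤ spec Vp * spec E * spec Up := by
        rw [hNeq]
        exact (spec_mul_le _ _).trans
          (mul_le_mul_of_nonneg_right (spec_mul_le _ _) (spec_nonneg _))
    _ ≤ spec Vp * (d ⟨ρ - 1, by omega⟩)⁻¹ * spec Up := by gcongr <;> exact spec_nonneg _
    _ = spec Vp * spec Up / d ⟨ρ - 1, by omega⟩ := by ring
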